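/- arXiv:1910.03070 — 2 statements merged into one kernel-verified Lean document; each statement's English description precedes it below -/
import Mathlib

section
/- Let v₀, v₁, …, v_m be points in ℝ² with v₀ strictly inside the convex hull of v₁,…,v_m arranged so that the star of v₀ consists of triangles (v₀, v_j, v_{j+1}) with positive orientation. Then the mean value coordinates w_j = c_j / Σ_l c_l, with c_j = (tan(α_{j-1}/2) + tan(α_j/2)) / ‖v₀ - v_j‖ where α_j is the angle at v₀ in triangle (v₀, v_j, v_{j+1}), satisfy w_j > 0, Σ_j w_j = 1, and Σ_j w_j v_j = v₀. -/
private lemma tanHalfCos (θ a : ℝ) (h : Real.cos (a/2) ≠ 0) :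
    Real.tan (a/2) * (Real.cos θ + Real.cos (θ + a)) = Real.sin (θ + a) - Real.sin θ := by
  have hs : Real.sin a = 2 * Real.sin (a/2) * Real.cos (a/2) := by
    have := Real.sin_two_mul (a/2); rwa [show 2*(a/2) = a by ring] at this
  have hcA : Real.cos a = 2 * Real.cos (a/2)^2 - 1 := by
    have := Real.cos_two_mul (a/2); rwa [show 2*(a/2) = a by ring] at this
  have hsc : Real.sin (a/2)^2 + Real.cos (a/2)^2 = 1 := Real.sin_sq_add_cos_sq _
  rw [Real.tan_eq_sin_div_cos, Real.sin_add, Real.cos_add, hs, hcA]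
  field_simp
  linear_combination (-2*Real.cos (a/2)*Real.sin θ) * hsc

private lemma tanHalfSin (θ a : ℝ) (h : Real.cos (a/2) ≠ 0) :
    Real.tan (a/2) * (Real.sin θ + Real.sin (θ + a)) = Real.cos θ - Real.cos (θ + a) := by
  have hs : Real.sin a = 2 * Real.sin (a/2) * Real.cos (a/2) := by
    have := Real.sin_two_mul (a/2); rwa [show 2*(a/2) = a by ring] at this
  have hcA : Real.cos a = 2 * Real.cos (a/2)^2 - 1 := by
    have := Real.cos_two_mul (a/2); rwa [show 2*(a/2) = a by ring] at this
  have hsc : Real.sin (a/2)^2 + Real.cos (a/2)^2 = 1 := Real.sin_sq_add_cos_sq _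
  rw [Real.tan_eq_sin_div_cos, Real.sin_add, Real.cos_add, hs, hcA]
  field_simp
  linear_combination (2*Real.cos (a/2)*Real.cos θ) * hsc



open EuclideanGeometry in
/-- Mean value coordinates form a barycentric coordinate system: for an interior
vertex `v₀` with neighbors `v 0, …, v (m-1)` in positive cyclic order, the weights
`w j = c j / ∑ c`, with `c j = (tan (α (j-1) / 2) + tan (α j / 2)) / ‖v₀ - v j‖`
and `α j` the angle `∠ (v j) v₀ (v (j+1))`, are positive, sum to `1`, and
reproduce `v₀` as a convex combination of the neighbors. -/
theorem meanValueCoordinates (m : ℕ) [NeZero m]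
    (v₀ : EuclideanSpace ℝ (Fin 2)) (v : Fin m → EuclideanSpace ℝ (Fin 2))
    (hne : ∀ j, v j ≠ v₀)
    (α : Fin m → ℝ)
    (hα : ∀ j, α j = ∠ (v j) v₀ (v (j + 1)))
    (hαpos : ∀ j, α j ∈ Set.Ioo (0 : ℝ) Real.pi)
    (hsum : ∑ j, α j = 2 * Real.pi)
    (horient : ∀ j, 0 < (v j - v₀) 0 * (v (j + 1) - v₀) 1
        - (v j - v₀) 1 * (v (j + 1) - v₀) 0)
    (cc : Fin m → ℝ)
    (hc : ∀ j, cc j = (Real.tan (α (j - 1) / 2) + Real.tan (α j / 2)) / ‖v₀ - v j‖)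
    (w : Fin m → ℝ)
    (hw : ∀ j, w j = cc j / ∑ l, cc l) :
    (∀ j, 0 < w j) ∧ ∑ j, w j = 1 ∧ ∑ j, w j • v j = v₀ := by
  open Fin.NatCast in
  have pi_pos := Real.pi_pos
  have hhalf : ∀ j, 0 < Real.tan (α j / 2) ∧ 0 < Real.cos (α j / 2) := by
    intro j
    obtain ⟨h0, h1⟩ := hαpos j
    exact ⟨Real.tan_pos_of_pos_of_lt_pi_div_two (by linarith) (by linarith),
      Real.cos_pos_of_mem_Ioo ⟨by linarith, by linarith⟩⟩
  set A : Fin m → ℝ := fun j => (v j - v₀) 0 with hAdef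
  set B : Fin m → ℝ := fun j => (v j - v₀) 1 with hBdef
  set r : Fin m → ℝ := fun j => ‖v₀ - v j‖ with hrdef
  have hr : ∀ j, 0 < r j := fun j => norm_pos_iff.2 (sub_ne_zero.2 (hne j).symm)
  have hAB : ∀ j, A j^2 + B j^2 = r j^2 := by
    intro j
    have h1 : r j = Real.sqrt ((v j - v₀) 0 ^2 + (v j - v₀) 1 ^2) := by
      rw [hrdef]
      simp only [norm_sub_rev v₀ (v j), EuclideanSpace.norm_eq]
      congr 1
      simp [Fin.sum_univ_two, Real.norm_eq_abs, sq_abs]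
    rw [show A j = (v j - v₀) 0 from rfl, show B j = (v j - v₀) 1 from rfl, h1,
      Real.sq_sqrt (by positivity)]
  have hcos : ∀ j, A j * A (j+1) + B j * B (j+1) = r j * r (j+1) * Real.cos (α j) := by
    intro j
    have h1 : Real.cos (α j)
        = (inner ℝ (v j - v₀) (v (j+1) - v₀) : ℝ) / (‖v j - v₀‖ * ‖v (j+1) - v₀‖) := by
      rw [hα j]
      exact InnerProductGeometry.cos_angle _ _
    have h2 : (inner ℝ (v j - v₀) (v (j+1) - v₀) : ℝ) = A j * A (j+1) + B j * B (j+1) := by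
      simp [PiLp.inner_apply, RCLike.inner_apply, Fin.sum_univ_two, hAdef, hBdef]
      ring
    have hn1 : ‖v j - v₀‖ = r j := (norm_sub_rev _ _)
    have hn2 : ‖v (j+1) - v₀‖ = r (j+1) := (norm_sub_rev _ _)
    rw [h1, h2, hn1, hn2]
    field_simp [(hr j).ne', (hr (j+1)).ne']
  have hsin : ∀ j, A j * B (j+1) - B j * A (j+1) = r j * r (j+1) * Real.sin (α j) := by
    intro j
    have h4 := Real.sin_sq_add_cos_sq (α j)
    have hsq : (A j * B (j+1) - B j * A (j+1))^2 = (r j * r (j+1) * Real.sin (α j))^2 := by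
      have h5 : (r j * r (j+1) * Real.sin (α j))^2
          = (r j^2)*(r (j+1)^2) - (r j * r (j+1) * Real.cos (α j))^2 := by
        linear_combination (r j^2*r (j+1)^2) * h4
      rw [h5, ← hAB j, ← hAB (j+1), ← hcos j]; ring
    have hx : 0 < A j * B (j+1) - B j * A (j+1) := horient j
    have hy : 0 < r j * r (j+1) * Real.sin (α j) := by
      have hsp := Real.sin_pos_of_pos_of_lt_pi (hαpos j).1 (hαpos j).2
      exact mul_pos (mul_pos (hr j) (hr (j+1))) hsp
    have h6 : (A j * B (j+1) - B j * A (j+1) - r j * r (j+1) * Real.sin (α j))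
        * (A j * B (j+1) - B j * A (j+1) + r j * r (j+1) * Real.sin (α j)) = 0 := by
      linear_combination hsq
    rcases mul_eq_zero.1 h6 with h | h
    · linarith
    · linarith
  have hrotA : ∀ j, r j * A (j+1) = r (j+1) * (A j * Real.cos (α j) - B j * Real.sin (α j)) := by
    intro j
    apply mul_left_cancel₀ (hr j).ne'
    linear_combination A j * hcos j - B j * hsin j - A (j+1) * hAB j
  have hrotB : ∀ j, r j * B (j+1) = r (j+1) * (B j * Real.cos (α j) + A j * Real.sin (α j)) := by
    intro j
    apply mul_left_cancel₀ (hr j).ne'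
    linear_combination B j * hcos j + A j * hsin j - B (j+1) * hAB j
  set θf : ℕ → ℝ := fun n => ∑ i ∈ Finset.range n, α (i : Fin m) with hθdef
  have hθsucc : ∀ n : ℕ, θf (n+1) = θf n + α (n : Fin m) := fun n =>
    Finset.sum_range_succ _ n
  have key : ∀ n : ℕ,
      r 0 * A (n : Fin m) = r (n : Fin m) * (A 0 * Real.cos (θf n) - B 0 * Real.sin (θf n))
      ∧ r 0 * B (n : Fin m) = r (n : Fin m) * (B 0 * Real.cos (θf n) + A 0 * Real.sin (θf n)) := by
    intro n
    induction n with
    | zero => simp [hθdef]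
    | succ n ih =>
      obtain ⟨ihA, ihB⟩ := ih
      have hcast : ((n+1 : ℕ) : Fin m) = (n : Fin m) + 1 := by push_cast; ring
      rw [hcast, hθsucc n, Real.cos_add, Real.sin_add]
      constructor
      · apply mul_left_cancel₀ (hr (n : Fin m)).ne'
        linear_combination r 0 * hrotA (n : Fin m)
          + (r ((n:Fin m)+1) * Real.cos (α (n:Fin m))) * ihA
          - (r ((n:Fin m)+1) * Real.sin (α (n:Fin m))) * ihB
      · apply mul_left_cancel₀ (hr (n : Fin m)).ne'
        linear_combination r 0 * hrotB (n : Fin m)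
          + (r ((n:Fin m)+1) * Real.cos (α (n:Fin m))) * ihB
          + (r ((n:Fin m)+1) * Real.sin (α (n:Fin m))) * ihA
  have hθm : θf m = 2 * Real.pi := by
    show ∑ i ∈ Finset.range m, α (i : Fin m) = 2 * Real.pi
    rw [← Fin.sum_univ_eq_sum_range (fun i => α (i : Fin m)) m]
    simp only [Fin.cast_val_eq_self]
    exact hsum
  have ha : ∀ n : ℕ, A (n : Fin m) / r (n : Fin m)
      = (A 0 * Real.cos (θf n) - B 0 * Real.sin (θf n)) / r 0 := by
    intro n
    have h := (key n).1
    field_simp [(hr (n : Fin m)).ne', (hr 0).ne']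
    linear_combination h
  have hb : ∀ n : ℕ, B (n : Fin m) / r (n : Fin m)
      = (B 0 * Real.cos (θf n) + A 0 * Real.sin (θf n)) / r 0 := by
    intro n
    have h := (key n).2
    field_simp [(hr (n : Fin m)).ne', (hr 0).ne']
    linear_combination h
  set G : ℕ → ℝ := fun n => (A 0 * Real.sin (θf n) + B 0 * Real.cos (θf n)) / r 0 with hGdef
  set H : ℕ → ℝ := fun n => (B 0 * Real.sin (θf n) - A 0 * Real.cos (θf n)) / r 0 with hHdef
  have hcast1 : ∀ n : ℕ, ((n+1 : ℕ) : Fin m) = (n : Fin m) + 1 := by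
    intro n; push_cast; ring
  have htermA : ∀ n : ℕ, Real.tan (α (n:Fin m)/2)
      * (A (n:Fin m)/r (n:Fin m) + A ((n:Fin m)+1)/r ((n:Fin m)+1)) = G (n+1) - G n := by
    intro n
    have h1 := ha n
    have h2 := ha (n+1)
    rw [hcast1 n] at h2
    have hc' := tanHalfCos (θf n) (α (n:Fin m)) (ne_of_gt (hhalf _).2)
    have hs' := tanHalfSin (θf n) (α (n:Fin m)) (ne_of_gt (hhalf _).2)
    rw [← hθsucc n] at hc' hs'
    rw [h1, h2, hGdef]
    linear_combination (A 0 * hc' - B 0 * hs') / r 0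
  have htermB : ∀ n : ℕ, Real.tan (α (n:Fin m)/2)
      * (B (n:Fin m)/r (n:Fin m) + B ((n:Fin m)+1)/r ((n:Fin m)+1)) = H (n+1) - H n := by
    intro n
    have h1 := hb n
    have h2 := hb (n+1)
    rw [hcast1 n] at h2
    have hc' := tanHalfCos (θf n) (α (n:Fin m)) (ne_of_gt (hhalf _).2)
    have hs' := tanHalfSin (θf n) (α (n:Fin m)) (ne_of_gt (hhalf _).2)
    rw [← hθsucc n] at hc' hs'
    rw [h1, h2, hHdef]
    linear_combination (B 0 * hc' + A 0 * hs') / r 0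
  have hθ0 : θf 0 = 0 := by simp [hθdef]
  have hfinA : ∑ j : Fin m, Real.tan (α j/2) * (A j/r j + A (j+1)/r (j+1)) = 0 := by
    have h1 := Fin.sum_univ_eq_sum_range
      (fun n => Real.tan (α (n:Fin m)/2)
        * (A (n:Fin m)/r (n:Fin m) + A ((n:Fin m)+1)/r ((n:Fin m)+1))) m
    simp only [Fin.cast_val_eq_self] at h1
    rw [h1, Finset.sum_congr rfl (fun n _ => htermA n), Finset.sum_range_sub G m]
    rw [hGdef]
    simp [hθm, hθ0, Real.sin_two_pi, Real.cos_two_pi]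
  have hfinB : ∑ j : Fin m, Real.tan (α j/2) * (B j/r j + B (j+1)/r (j+1)) = 0 := by
    have h1 := Fin.sum_univ_eq_sum_range
      (fun n => Real.tan (α (n:Fin m)/2)
        * (B (n:Fin m)/r (n:Fin m) + B ((n:Fin m)+1)/r ((n:Fin m)+1))) m
    simp only [Fin.cast_val_eq_self] at h1
    rw [h1, Finset.sum_congr rfl (fun n _ => htermB n), Finset.sum_range_sub H m]
    rw [hHdef]
    simp [hθm, hθ0, Real.sin_two_pi, Real.cos_two_pi]
  have hshift : ∀ (F : Fin m → ℝ),
      ∑ j : Fin m, Real.tan (α (j-1)/2) * F j / r j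
        = ∑ j : Fin m, Real.tan (α j/2) * F (j+1) / r (j+1) := by
    intro F
    rw [← Equiv.sum_comp (Equiv.addRight (1 : Fin m))
      (fun j => Real.tan (α (j-1)/2) * F j / r j)]
    apply Finset.sum_congr rfl
    intro k _
    simp [Equiv.coe_addRight, add_sub_cancel_right]
  have hccr : ∀ j, cc j = (Real.tan (α (j - 1) / 2) + Real.tan (α j / 2)) / r j := hc
  have hsplit : ∀ (F : Fin m → ℝ), ∑ j, cc j * F j = 0 →
      True := fun _ _ => trivial
  have hccA : ∑ j, cc j * A j = 0 := by
    calc ∑ j, cc j * A j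
        = ∑ j, (Real.tan (α (j-1)/2) * A j / r j + Real.tan (α j/2) * A j / r j) := by
          refine Finset.sum_congr rfl fun j _ => ?_
          rw [hccr j]
          field_simp
      _ = ∑ j, Real.tan (α (j-1)/2) * A j / r j + ∑ j, Real.tan (α j/2) * A j / r j :=
          Finset.sum_add_distrib
      _ = ∑ j, Real.tan (α j/2) * A (j+1) / r (j+1) + ∑ j, Real.tan (α j/2) * A j / r j := by
          rw [hshift A]
      _ = ∑ j, Real.tan (α j/2) * (A j/r j + A (j+1)/r (j+1)) := by
          rw [← Finset.sum_add_distrib]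
          refine Finset.sum_congr rfl fun j _ => ?_
          ring
      _ = 0 := hfinA
  have hccB : ∑ j, cc j * B j = 0 := by
    calc ∑ j, cc j * B j
        = ∑ j, (Real.tan (α (j-1)/2) * B j / r j + Real.tan (α j/2) * B j / r j) := by
          refine Finset.sum_congr rfl fun j _ => ?_
          rw [hccr j]
          field_simp
      _ = ∑ j, Real.tan (α (j-1)/2) * B j / r j + ∑ j, Real.tan (α j/2) * B j / r j :=
          Finset.sum_add_distrib
      _ = ∑ j, Real.tan (α j/2) * B (j+1) / r (j+1) + ∑ j, Real.tan (α j/2) * B j / r j := by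
          rw [hshift B]
      _ = ∑ j, Real.tan (α j/2) * (B j/r j + B (j+1)/r (j+1)) := by
          rw [← Finset.sum_add_distrib]
          refine Finset.sum_congr rfl fun j _ => ?_
          ring
      _ = 0 := hfinB
  have hccpos : ∀ j, 0 < cc j := by
    intro j
    rw [hccr j]
    exact div_pos (add_pos (hhalf _).1 (hhalf _).1) (hr j)
  have hS : 0 < ∑ l, cc l :=
    Finset.sum_pos (fun j _ => hccpos j) ⟨0, Finset.mem_univ _⟩
  refine ⟨fun j => ?_, ?_, ?_⟩
  · rw [hw j]; exact div_pos (hccpos j) hS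
  · simp only [hw]
    rw [← Finset.sum_div]
    exact div_self hS.ne'
  · have hzero : ∑ j, w j • (v j - v₀) = 0 := by
      have hwA : ∑ j, w j * A j = 0 := by
        simp only [hw, div_mul_eq_mul_div, ← Finset.sum_div]
        rw [hccA, zero_div]
      have hwB : ∑ j, w j * B j = 0 := by
        simp only [hw, div_mul_eq_mul_div, ← Finset.sum_div]
        rw [hccB, zero_div]
      have hcomp : ∀ (i : Fin 2), (∑ x : Fin m, w x • (v x - v₀)) i
          = ∑ x : Fin m, w x * (v x i - v₀ i) := by
        intro i
        have h := map_sum (EuclideanSpace.proj i (𝕜 := ℝ))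
          (fun x => w x • (v x - v₀)) Finset.univ
        simp only [EuclideanSpace.proj, PiLp.proj_apply, PiLp.smul_apply, PiLp.sub_apply,
          smul_eq_mul] at h
        exact h
      ext i
      fin_cases i
      · exact (hcomp 0).trans hwA
      · exact (hcomp 1).trans hwB
    have hw1 : ∑ j, w j = 1 := by
      simp only [hw]
      rw [← Finset.sum_div]
      exact div_self hS.ne'
    have : ∑ j, w j • v j = ∑ j, (w j • (v j - v₀) + w j • v₀) := by
      refine Finset.sum_congr rfl fun j _ => ?_
      rw [smul_sub]
      abel
    rw [this, Finset.sum_add_distrib, hzero, zero_add, ← Finset.sum_smul, hw1, one_smul]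
end

section
/- Let the interior angle of the wedge ∠A'KA with A = (1,0), A' = (-1,0), K = (0,-1/2) and the interior angle of the wedge ∠D'GD with D = (c, (c+1)/2), D' = (-c, (c+1)/2), G = (0,1/2), where c = (2+√2)/(3+√2), sum to 360°. -/
noncomputable def c : ℝ := (2 + Real.sqrt 2) / (3 + Real.sqrt 2)

/-!
Both wedges are symmetric about the vertical axis with arms of slope `1/2`: the arms at `K` are
`(∓1, 1/2)` and those at `G` are `c • (∓1, 1/2)`. So both angles equal the angle between
`(-1, 1/2)` and `(1, 1/2)`, whose cosine `-3/5` is that of `π - 2 arctan (1/2)`.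
-/

open Real EuclideanGeometry RealInnerProductSpace

lemma cos_pi_sub_two_mul_arctan (t : ℝ) :
    cos (π - 2 * arctan t) = (t ^ 2 - 1) / (t ^ 2 + 1) := by
  rw [cos_pi_sub, cos_two_mul, cos_sq_arctan]
  field_simp
  ring

lemma EuclideanSpace.norm_fin_two (x y : ℝ) : ‖!₂[x, y]‖ = √(x ^ 2 + y ^ 2) := by
  simp [EuclideanSpace.norm_eq, Fin.sum_univ_two]

lemma EuclideanSpace.inner_fin_two (x y x' y' : ℝ) : ⟪!₂[x, y], !₂[x', y']⟫ = x * x' + y * y' := by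
  simp [PiLp.inner_apply, Fin.sum_univ_two]
  ring

lemma InnerProductGeometry.angle_neg_one_one {t : ℝ} (ht : 0 ≤ t) :
    InnerProductGeometry.angle !₂[-1, t] !₂[1, t] = π - 2 * arctan t := by
  have hcos : ⟪!₂[-1, t], !₂[1, t]⟫ / (‖!₂[-1, t]‖ * ‖!₂[1, t]‖) = cos (π - 2 * arctan t) := by
    rw [EuclideanSpace.inner_fin_two, EuclideanSpace.norm_fin_two, EuclideanSpace.norm_fin_two,
      cos_pi_sub_two_mul_arctan, neg_one_sq, one_pow, mul_self_sqrt (by positivity)]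
    ring
  rw [InnerProductGeometry.angle, hcos, arccos_cos]
  · linarith [arctan_lt_pi_div_two t, pi_pos]
  · linarith [arctan_nonneg.2 ht]

lemma EuclideanGeometry.angle_symmetric_wedge (x y : ℝ) {a t : ℝ} (ha : 0 < a) (ht : 0 ≤ t) :
    ∠ !₂[x - a, y + a * t] !₂[x, y] !₂[x + a, y + a * t] = π - 2 * arctan t := by
  have hleft : !₂[x - a, y + a * t] -ᵥ !₂[x, y] = a • !₂[-1, t] := by
    ext i; fin_cases i <;> simp
  have hright : !₂[x + a, y + a * t] -ᵥ !₂[x, y] = a • !₂[1, t] := by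
    ext i; fin_cases i <;> simp
  rw [EuclideanGeometry.angle, hleft, hright, InnerProductGeometry.angle_smul_left_of_pos _ _ ha,
    InnerProductGeometry.angle_smul_right_of_pos _ _ ha, InnerProductGeometry.angle_neg_one_one ht]

open EuclideanGeometry Real in
/-- The wedge angle `∠A'KA` and the (reflex) wedge angle at `G` between the rays `GD'`
and `GD` sum to `360°`: with `θ = arctan (1/2)`, `∠A'KA = π - 2θ` and the reflex angle
`2π - ∠D'GD = π + 2θ`, so their sum is `2π`. -/
theorem wedge_angles_sum (A A' K D D' G : EuclideanSpace ℝ (Fin 2))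
    (hA : A = !₂[1, 0]) (hA' : A' = !₂[-1, 0]) (hK : K = !₂[0, -1/2])
    (hD : D = !₂[c, (c + 1) / 2]) (hD' : D' = !₂[-c, (c + 1) / 2]) (hG : G = !₂[0, 1/2]) :
    ∠ A' K A = π - 2 * arctan (1 / 2) ∧
    2 * π - ∠ D' G D = π + 2 * arctan (1 / 2) ∧
    ∠ A' K A + (2 * π - ∠ D' G D) = 2 * π := by
  have hc : 0 < c := by unfold c; positivity
  have hK_wedge : ∠ A' K A = π - 2 * arctan (1 / 2) := by
    rw [hA', hK, hA]
    convert angle_symmetric_wedge 0 (-1 / 2) one_pos (by norm_num : (0 : ℝ) ≤ 1 / 2) using 2 <;>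
      norm_num
  have hG_wedge : ∠ D' G D = π - 2 * arctan (1 / 2) := by
    rw [hD', hG, hD]
    convert angle_symmetric_wedge 0 (1 / 2) hc (by norm_num : (0 : ℝ) ≤ 1 / 2) using 2 <;>
      ring_nf
  refine ⟨hK_wedge, ?_, ?_⟩ <;> rw [hG_wedge] <;> linarith
end
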